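/- arXiv:2006.14835 — 5 statements merged into one kernel-verified Lean document; each statement's English description precedes it below -/
import Mathlib

section
/- Let A ∈ ℝ^{M×N} and S ⊂ [N]. If there exists ν ∈ ℝ^M and t > 0 such that (A*ν)_i ≤ -t for all i ∈ S and (A*ν)_i ≥ t for all i ∉ S, then the set {x ∈ [0,1]^N : Ax = A·1_S} equals {1_S}, where 1_S denotes the indicator vector of S. -/
/-! The vector `g = Aᵀν` separates `1_S` from every other point of the box: on the box,
`g ⬝ᵥ (x - 1_S) ≥ t ∑ᵢ |xᵢ - (1_S)ᵢ|`, since `x - 1_S` is nonpositive on `S` and nonnegative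
off `S`. If `Ax = A1_S` then `g ⬝ᵥ x = ν ⬝ᵥ Ax = g ⬝ᵥ 1_S`, so the left side vanishes and
`x = 1_S` because `t > 0`. -/

open Finset Matrix

section Certificate

variable {𝕜 ι : Type*} [CommRing 𝕜] [LinearOrder 𝕜] [IsStrictOrderedRing 𝕜]

lemma mul_abs_sub_ite_le_mul_sub {p : Prop} [Decidable p] {t g x : 𝕜}
    (hp : p → g ≤ -t) (hnp : ¬p → t ≤ g) (hx : x ∈ Set.Icc (0 : 𝕜) 1) :
    t * |x - if p then 1 else 0| ≤ g * (x - if p then 1 else 0) := by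
  by_cases h : p
  · simp only [h, if_true]
    rw [abs_of_nonpos (by linarith [hx.2])]
    nlinarith [hp h, hx.2]
  · simp only [h, if_false, sub_zero]
    rw [abs_of_nonneg hx.1]
    exact mul_le_mul_of_nonneg_right (hnp h) hx.1

variable [Fintype ι] [DecidableEq ι]

lemma eq_indicator_of_dotProduct_eq {t : 𝕜} (ht : 0 < t) {S : Finset ι} {g x : ι → 𝕜}
    (hS : ∀ i ∈ S, g i ≤ -t) (hSc : ∀ i ∉ S, t ≤ g i) (hx : ∀ i, x i ∈ Set.Icc (0 : 𝕜) 1)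
    (hdot : g ⬝ᵥ x = g ⬝ᵥ fun i => if i ∈ S then 1 else 0) :
    x = fun i => if i ∈ S then 1 else 0 := by
  set s : ι → 𝕜 := fun i => if i ∈ S then 1 else 0
  have hbound i : t * |x i - s i| ≤ g i * (x i - s i) :=
    mul_abs_sub_ite_le_mul_sub (hS i) (hSc i) (hx i)
  have hnonneg i : 0 ≤ g i * (x i - s i) := (by positivity : 0 ≤ t * |x i - s i|).trans (hbound i)
  have hsum : ∑ i, g i * (x i - s i) = 0 := by
    simp only [mul_sub, sum_sub_distrib]
    exact sub_eq_zero.mpr hdot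
  have hzero := (sum_eq_zero_iff_of_nonneg fun i _ => hnonneg i).mp hsum
  funext i
  have : t * |x i - s i| ≤ 0 := (hbound i).trans (hzero i (mem_univ i)).le
  have : |x i - s i| ≤ 0 := nonpos_of_mul_nonpos_right this ht
  exact sub_eq_zero.mp (abs_nonpos_iff.mp this)

end Certificate

theorem dual_certificate_implies_unique {M N : ℕ} (A : Matrix (Fin M) (Fin N) ℝ)
    (S : Finset (Fin N)) (ν : Fin M → ℝ) (t : ℝ) (ht : 0 < t)
    (hS : ∀ i ∈ S, A.transpose.mulVec ν i ≤ -t)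
    (hSc : ∀ i ∉ S, t ≤ A.transpose.mulVec ν i) :
    {x : Fin N → ℝ | (∀ i, x i ∈ Set.Icc (0:ℝ) 1) ∧
        A.mulVec x = A.mulVec (fun i => if i ∈ S then (1:ℝ) else 0)}
      = {fun i => if i ∈ S then (1:ℝ) else 0} := by
  ext x
  simp only [Set.mem_ofPred_eq, Set.mem_singleton_iff]
  constructor
  · rintro ⟨hx, hAx⟩
    refine eq_indicator_of_dotProduct_eq ht hS hSc hx ?_
    rw [mulVec_transpose, ← dotProduct_mulVec, ← dotProduct_mulVec, hAx]
  · rintro rfl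
    exact ⟨fun i => by dsimp only; split_ifs <;> norm_num, rfl⟩
end

section
/- Let A ∈ ℝ^{M×N} and S ⊂ [N]. Then ker(A) ∩ H_S^0 = {0} if and only if {x ∈ [0,1]^N : Ax = A·1_S} = {1_S}, where H_S^0 = {w ∈ ℝ^N : w_i ≤ 0 for i ∈ S, w_i ≥ 0 for i ∉ S}. -/
/-!
A point `x` of the cube `[0,1]^N` deviates from the vertex `1_S` in a direction of the cone
`H_S^0`, and conversely every direction `w ∈ H_S^0` leads from `1_S` into the cube for a small
enough step `c > 0`; both moves stay in the fibre of `x ↦ Ax` through `1_S` when the direction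
lies in `ker A`.
-/

section SignCone

variable {ι : Type*} [DecidableEq ι] (S : Finset ι)

lemma indicator_mem_Icc (i : ι) : (if i ∈ S then (1 : ℝ) else 0) ∈ Set.Icc (0 : ℝ) 1 := by
  split_ifs <;> simp

lemma sub_indicator_nonpos_of_mem {x : ι → ℝ} (hx : ∀ i, x i ∈ Set.Icc (0 : ℝ) 1) :
    ∀ i ∈ S, x i - (if i ∈ S then (1 : ℝ) else 0) ≤ 0 := by
  intro i hi
  simpa [hi] using (hx i).2

lemma sub_indicator_nonneg_of_notMem {x : ι → ℝ} (hx : ∀ i, x i ∈ Set.Icc (0 : ℝ) 1) :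
    ∀ i ∉ S, 0 ≤ x i - (if i ∈ S then (1 : ℝ) else 0) := by
  intro i hi
  simpa [hi] using (hx i).1

lemma indicator_add_smul_mem_Icc {w : ι → ℝ} (hS : ∀ i ∈ S, w i ≤ 0) (hSc : ∀ i ∉ S, 0 ≤ w i)
    {c : ℝ} (hc : 0 ≤ c) (hcw : ∀ i, c * |w i| ≤ 1) (i : ι) :
    ((fun i => if i ∈ S then (1 : ℝ) else 0) + c • w) i ∈ Set.Icc (0 : ℝ) 1 := by
  have hci := hcw i
  by_cases hi : i ∈ S
  · rw [abs_of_nonpos (hS i hi)] at hci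
    have := mul_nonpos_of_nonneg_of_nonpos hc (hS i hi)
    simp only [Pi.add_apply, Pi.smul_apply, smul_eq_mul, if_pos hi, Set.mem_Icc]
    constructor <;> linarith
  · rw [abs_of_nonneg (hSc i hi)] at hci
    simp only [Pi.add_apply, Pi.smul_apply, smul_eq_mul, if_neg hi, zero_add, Set.mem_Icc]
    exact ⟨mul_nonneg hc (hSc i hi), hci⟩

lemma exists_pos_indicator_add_smul_mem_Icc [Fintype ι] {w : ι → ℝ}
    (hS : ∀ i ∈ S, w i ≤ 0) (hSc : ∀ i ∉ S, 0 ≤ w i) :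
    ∃ c : ℝ, 0 < c ∧
      ∀ i, ((fun i => if i ∈ S then (1 : ℝ) else 0) + c • w) i ∈ Set.Icc (0 : ℝ) 1 := by
  refine ⟨(1 + ‖w‖)⁻¹, by positivity, indicator_add_smul_mem_Icc S hS hSc (by positivity) ?_⟩
  intro i
  rw [inv_mul_le_iff₀ (by positivity), mul_one, ← Real.norm_eq_abs]
  linarith [norm_le_pi_norm w i, norm_nonneg w]

end SignCone

theorem kernel_condition_iff_unique {M N : ℕ} (A : Matrix (Fin M) (Fin N) ℝ)
    (S : Finset (Fin N)) :
    (∀ w : Fin N → ℝ, A.mulVec w = 0 → (∀ i ∈ S, w i ≤ 0) → (∀ i ∉ S, 0 ≤ w i) → w = 0)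
      ↔ {x : Fin N → ℝ | (∀ i, x i ∈ Set.Icc (0:ℝ) 1) ∧
            A.mulVec x = A.mulVec (fun i => if i ∈ S then (1:ℝ) else 0)}
          = {fun i => if i ∈ S then (1:ℝ) else 0} := by
  set e : Fin N → ℝ := fun i => if i ∈ S then (1:ℝ) else 0
  constructor
  · intro hker
    refine Set.eq_singleton_iff_unique_mem.mpr ⟨⟨indicator_mem_Icc S, rfl⟩, ?_⟩
    rintro x ⟨hx, hAx⟩
    refine sub_eq_zero.mp (hker _ ?_ (sub_indicator_nonpos_of_mem S hx)
      (sub_indicator_nonneg_of_notMem S hx))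
    rw [Matrix.mulVec_sub, hAx, sub_self]
  · intro hfibre w hAw hS hSc
    obtain ⟨c, hc, hcube⟩ := exists_pos_indicator_add_smul_mem_Icc S hS hSc
    have hmem : e + c • w ∈ {x : Fin N → ℝ | (∀ i, x i ∈ Set.Icc (0:ℝ) 1) ∧
        A.mulVec x = A.mulVec e} := by
      refine ⟨hcube, ?_⟩
      rw [Matrix.mulVec_add, Matrix.mulVec_smul, hAw, smul_zero, add_zero]
    rw [hfibre, Set.mem_singleton_iff, add_eq_left, smul_eq_zero] at hmem
    exact hmem.resolve_left hc.ne'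
end

section
/- Let r, t, η > 0, S ⊂ [N], A ∈ ℝ^{M×N}. Suppose there exists ν ∈ ℝ^M with ‖ν‖₂ ≤ r such that (A*ν)_i ≤ -t for i ∈ S and (A*ν)_i ≥ t for i ∉ S. Let x₀ = 1_S and y = Ax₀ + n with ‖n‖₂ ≤ η. Then any minimizer x* of ‖Ax - y‖₂ over x ∈ [0,1]^N satisfies ‖x* - x₀‖₂ ≤ (2r/t)·η. -/
/-!
Let `h = x* - x₀`. Since `x₀` is feasible, the residual of `x*` is at most `‖n‖`, so `‖A h‖ ≤ 2η`.
Since `x*` lies in the box, `h i ≤ 0` on `S` and `h i ≥ 0` off `S`; the sign pattern of the dual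
certificate `ν` therefore gives `t ‖h‖₂ ≤ t ‖h‖₁ ≤ ⟪A*ν, h⟫ = ⟪ν, A h⟫ ≤ r ‖A h‖₂ ≤ 2 r η`.
-/

open Finset

/-- Euclidean norm of a finite real vector. -/
noncomputable def eucNorm {n : ℕ} (v : Fin n → ℝ) : ℝ :=
  Real.sqrt (∑ i, (v i) ^ 2)

open Matrix

lemma eucNorm_eq_norm {n : ℕ} (v : Fin n → ℝ) :
    eucNorm v = ‖(WithLp.toLp 2 v : EuclideanSpace ℝ (Fin n))‖ := by
  simp [eucNorm, EuclideanSpace.norm_eq]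

lemma eucNorm_nonneg {n : ℕ} (v : Fin n → ℝ) : 0 ≤ eucNorm v :=
  Real.sqrt_nonneg _

lemma eucNorm_neg {n : ℕ} (v : Fin n → ℝ) : eucNorm (-v) = eucNorm v := by
  simp [eucNorm]

lemma eucNorm_add_le {n : ℕ} (v w : Fin n → ℝ) : eucNorm (v + w) ≤ eucNorm v + eucNorm w := by
  simpa only [eucNorm_eq_norm, WithLp.toLp_add] using norm_add_le _ _

lemma dotProduct_le_eucNorm_mul {n : ℕ} (v w : Fin n → ℝ) : v ⬝ᵥ w ≤ eucNorm v * eucNorm w :=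
  Real.sum_mul_le_sqrt_mul_sqrt _ _ _

lemma eucNorm_le_sum_abs {n : ℕ} (v : Fin n → ℝ) : eucNorm v ≤ ∑ i, |v i| := by
  refine Real.sqrt_le_iff.mpr ⟨sum_nonneg fun i _ => abs_nonneg _, ?_⟩
  simpa only [sq_abs] using sum_sq_le_sq_sum_of_nonneg fun i _ => abs_nonneg (v i)

lemma eucNorm_mulVec_sub_le_of_residual_le {m n : ℕ} (A : Matrix (Fin m) (Fin n) ℝ)
    (x x₀ : Fin n → ℝ) (y : Fin m → ℝ) (h : eucNorm (A *ᵥ x - y) ≤ eucNorm (A *ᵥ x₀ - y)) :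
    eucNorm (A *ᵥ (x - x₀)) ≤ 2 * eucNorm (A *ᵥ x₀ - y) := by
  have hsplit : A *ᵥ (x - x₀) = (A *ᵥ x - y) + -(A *ᵥ x₀ - y) := by
    rw [mulVec_sub]; abel
  calc eucNorm (A *ᵥ (x - x₀)) ≤ eucNorm (A *ᵥ x - y) + eucNorm (A *ᵥ x₀ - y) := by
        rw [hsplit, ← eucNorm_neg (A *ᵥ x₀ - y)]; exact eucNorm_add_le _ _
    _ ≤ 2 * eucNorm (A *ᵥ x₀ - y) := by linarith

lemma mul_eucNorm_le_of_dual_certificate {m n : ℕ} (A : Matrix (Fin m) (Fin n) ℝ)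
    (ν : Fin m → ℝ) (h : Fin n → ℝ) {t : ℝ} (ht : 0 ≤ t)
    (hsign : ∀ i, t * |h i| ≤ (Aᵀ *ᵥ ν) i * h i) :
    t * eucNorm h ≤ eucNorm ν * eucNorm (A *ᵥ h) :=
  calc t * eucNorm h ≤ t * ∑ i, |h i| := mul_le_mul_of_nonneg_left (eucNorm_le_sum_abs h) ht
    _ = ∑ i, t * |h i| := mul_sum _ _ _
    _ ≤ ∑ i, (Aᵀ *ᵥ ν) i * h i := sum_le_sum fun i _ => hsign i
    _ = ν ⬝ᵥ (A *ᵥ h) := by rw [dotProduct_mulVec, ← mulVec_transpose]; rfl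
    _ ≤ eucNorm ν * eucNorm (A *ᵥ h) := dotProduct_le_eucNorm_mul _ _

lemma mul_abs_sub_indicator_le {n : ℕ} (S : Finset (Fin n)) (w x : Fin n → ℝ) {t : ℝ}
    (hS : ∀ i ∈ S, w i ≤ -t) (hSc : ∀ i ∉ S, t ≤ w i) (hx : ∀ i, x i ∈ Set.Icc (0 : ℝ) 1)
    (i : Fin n) :
    t * |x i - if i ∈ S then 1 else 0| ≤ w i * (x i - if i ∈ S then 1 else 0) := by
  obtain ⟨hx0, hx1⟩ := hx i
  by_cases hi : i ∈ S
  · have := hS i hi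
    rw [if_pos hi, abs_of_nonpos (by linarith)]
    nlinarith
  · have := hSc i hi
    rw [if_neg hi, sub_zero, abs_of_nonneg hx0]
    nlinarith

theorem noisy_recovery_general {M N : ℕ} (A : Matrix (Fin M) (Fin N) ℝ) (S : Finset (Fin N))
    (r t η : ℝ) (ht : 0 < t)
    (ν : Fin M → ℝ) (hν : eucNorm ν ≤ r)
    (hS : ∀ i ∈ S, A.transpose.mulVec ν i ≤ -t)
    (hSc : ∀ i ∉ S, t ≤ A.transpose.mulVec ν i)
    (x₀ : Fin N → ℝ) (hx₀ : x₀ = fun i => if i ∈ S then (1:ℝ) else 0)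
    (n : Fin M → ℝ) (hn : eucNorm n ≤ η)
    (y : Fin M → ℝ) (hy : y = A.mulVec x₀ + n)
    (xstar : Fin N → ℝ) (hbox : ∀ i, xstar i ∈ Set.Icc (0:ℝ) 1)
    (hmin : ∀ x : Fin N → ℝ, (∀ i, x i ∈ Set.Icc (0:ℝ) 1) →
      eucNorm (A.mulVec xstar - y) ≤ eucNorm (A.mulVec x - y)) :
    eucNorm (xstar - x₀) ≤ (2 * r / t) * η := by
  have hx₀box : ∀ i, x₀ i ∈ Set.Icc (0:ℝ) 1 := by
    intro i; rw [hx₀]; dsimp only; split_ifs <;> simp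
  have hresidual : A *ᵥ x₀ - y = -n := by rw [hy]; abel
  have hAh : eucNorm (A *ᵥ (xstar - x₀)) ≤ 2 * η := by
    have := eucNorm_mulVec_sub_le_of_residual_le A xstar x₀ y (hmin x₀ hx₀box)
    rw [hresidual, eucNorm_neg] at this
    linarith
  have hkey := mul_eucNorm_le_of_dual_certificate A ν (xstar - x₀) ht.le fun i => by
    simpa only [hx₀, Pi.sub_apply] using mul_abs_sub_indicator_le S _ xstar hS hSc hbox i
  have hr : 0 ≤ r := (eucNorm_nonneg ν).trans hν
  rw [div_mul_eq_mul_div, le_div_iff₀ ht, mul_comm]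
  calc t * eucNorm (xstar - x₀) ≤ eucNorm ν * eucNorm (A *ᵥ (xstar - x₀)) := hkey
    _ ≤ r * (2 * η) := mul_le_mul hν hAh (eucNorm_nonneg _) hr
    _ = 2 * r * η := by ring

theorem noisy_recovery {M N : ℕ} (A : Matrix (Fin M) (Fin N) ℝ) (S : Finset (Fin N))
    (r t η : ℝ) (hr : 0 < r) (ht : 0 < t) (hη : 0 < η)
    (ν : Fin M → ℝ) (hν : eucNorm ν ≤ r)
    (hS : ∀ i ∈ S, A.transpose.mulVec ν i ≤ -t)
    (hSc : ∀ i ∉ S, t ≤ A.transpose.mulVec ν i)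
    (x₀ : Fin N → ℝ) (hx₀ : x₀ = fun i => if i ∈ S then (1:ℝ) else 0)
    (n : Fin M → ℝ) (hn : eucNorm n ≤ η)
    (y : Fin M → ℝ) (hy : y = A.mulVec x₀ + n)
    (xstar : Fin N → ℝ) (hbox : ∀ i, xstar i ∈ Set.Icc (0:ℝ) 1)
    (hmin : ∀ x : Fin N → ℝ, (∀ i, x i ∈ Set.Icc (0:ℝ) 1) →
      eucNorm (A.mulVec xstar - y) ≤ eucNorm (A.mulVec x - y)) :
    eucNorm (xstar - x₀) ≤ (2 * r / t) * η :=
  noisy_recovery_general A S r t η ht ν hν hS hSc x₀ hx₀ n hn y hy xstar hbox hmin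
end

section
/- Let b be a random vector with independent mean-zero entries with E[b_i²] = σ², Φ its N×N circulant matrix, Θ ⊂ [N] with |Θ| = M, and Φ_Θ the rows of Φ indexed by Θ. Define X₃(i) = ⟨Φ_Θ 1_S, 1⟩·⟨1, Φ_Θ e_i⟩, where 1 ∈ ℝ^M is the all-ones vector. Then E[X₃(i)] = σ² ∑_{k ∈ S} |Θ ∩ ((k - i) + Θ)|, where addition is modulo N; in particular 0 ≤ E[X₃(i)] ≤ s M σ² for all i, and E[X₃(i)] ≥ M σ² when i ∈ S. -/
/-!
Expanding the product, `X₃` is a double sum of covariances `E[b_a b_c]`, which by independence and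
zero means equal `σ²` when `a = c` and vanish otherwise. So `X₃ = σ²` times the number of triples
`(k, m, l) ∈ S × Θ × Θ` with `k - m = i - l`; for fixed `k` these are the pairs `(m, l)` of
elements of `Θ` differing by `k - i`, counted by `|Θ ∩ ((k - i) + Θ)| ≤ |Θ|`, with equality for
`k = i`.
-/

open Finset MeasureTheory ProbabilityTheory

section Uncorrelated

variable {ι Ω : Type*} [DecidableEq ι] {mΩ : MeasurableSpace Ω} {μ : Measure Ω}
  {b : ι → Ω → ℝ} {σ : ℝ}

lemma integral_mul_eq_ite_of_iIndepFun (hL2 : ∀ i, MemLp (b i) 2 μ) (hindep : iIndepFun b μ)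
    (hmean : ∀ i, ∫ ω, b i ω ∂μ = 0) (hvar : ∀ i, ∫ ω, b i ω ^ 2 ∂μ = σ ^ 2) (a c : ι) :
    ∫ ω, b a ω * b c ω ∂μ = if a = c then σ ^ 2 else 0 := by
  split_ifs with h
  · subst h
    simpa only [sq] using hvar a
  · have := (hindep.indepFun h).integral_mul_eq_mul_integral (hL2 a).aestronglyMeasurable
      (hL2 c).aestronglyMeasurable
    simpa only [Pi.mul_apply, hmean, mul_zero] using this

lemma integral_sum_mul_sum_of_iIndepFun {α β : Type*} (hL2 : ∀ i, MemLp (b i) 2 μ)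
    (hindep : iIndepFun b μ) (hmean : ∀ i, ∫ ω, b i ω ∂μ = 0)
    (hvar : ∀ i, ∫ ω, b i ω ^ 2 ∂μ = σ ^ 2) (s : Finset α) (t : Finset β) (f : α → ι)
    (g : β → ι) :
    ∫ ω, (∑ x ∈ s, b (f x) ω) * (∑ y ∈ t, b (g y) ω) ∂μ =
      σ ^ 2 * ∑ x ∈ s, (#{y ∈ t | f x = g y} : ℝ) := by
  have hint : ∀ a c, Integrable (fun ω => b a ω * b c ω) μ := fun a c =>
    (hL2 a).integrable_mul (hL2 c)
  simp only [sum_mul_sum]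
  rw [mul_sum, integral_finsetSum _ fun x _ => integrable_finsetSum _ fun y _ => hint _ _]
  refine sum_congr rfl fun x _ => ?_
  rw [integral_finsetSum _ fun y _ => hint _ _]
  simp only [integral_mul_eq_ite_of_iIndepFun hL2 hindep hmean hvar, sum_ite, sum_const_zero,
    sum_const, nsmul_eq_mul, add_zero, mul_comm]

end Uncorrelated

lemma sum_card_filter_sub_eq_card_inter_image_add {G : Type*} [AddCommGroup G] [DecidableEq G]
    (A : Finset G) (d : G) :
    ∑ m ∈ A, #{l ∈ A | m - l = d} = #(A ∩ A.image (d + ·)) := by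
  have hfiber : ∀ m, #{l ∈ A | m - l = d} = if m - d ∈ A then 1 else 0 := by
    intro m
    have : ∀ l, m - l = d ↔ l = m - d := fun l => by constructor <;> rintro rfl <;> abel
    simp only [this, filter_eq', apply_ite card, card_singleton, card_empty]
  rw [sum_congr rfl fun m _ => hfiber m, ← card_filter]
  congr 1
  ext m
  simp [add_comm d, sub_eq_add_neg]

theorem expectation_X3_general {N : ℕ}
    {Ω : Type*} [MeasureSpace Ω] (μ : Measure Ω)
    (b : ZMod N → Ω → ℝ) (σ : ℝ)
    (hL2 : ∀ i, MemLp (b i) 2 μ)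
    (hindep : iIndepFun (m := fun _ => Real.measurableSpace) b μ)
    (hmean : ∀ i, ∫ ω, b i ω ∂μ = 0)
    (hvar : ∀ i, ∫ ω, (b i ω) ^ 2 ∂μ = σ ^ 2)
    (Θ S : Finset (ZMod N)) (M s : ℕ) (hΘ : Θ.card = M) (hS : S.card = s)
    (i : ZMod N)
    (X₃ : ℝ)
    (hX₃ : X₃ = ∫ ω, ((∑ m ∈ Θ, ∑ k ∈ S, b (k - m) ω) * (∑ l ∈ Θ, b (i - l) ω)) ∂μ) :
    X₃ = σ ^ 2 * ∑ k ∈ S, ((Θ ∩ (Θ.image ((k - i) + ·))).card : ℝ) ∧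
      0 ≤ X₃ ∧ X₃ ≤ (s : ℝ) * M * σ ^ 2 ∧ (i ∈ S → (M : ℝ) * σ ^ 2 ≤ X₃) := by
  have hformula : X₃ = σ ^ 2 * ∑ k ∈ S, ((Θ ∩ (Θ.image ((k - i) + ·))).card : ℝ) := by
    have hrow : ∀ ω, ∑ m ∈ Θ, ∑ k ∈ S, b (k - m) ω = ∑ p ∈ S ×ˢ Θ, b (p.1 - p.2) ω :=
      fun ω => by rw [sum_comm, sum_product]
    have hmatch : ∀ k m l : ZMod N, k - m = i - l ↔ m - l = k - i := fun _ _ _ => by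
      constructor <;> intro h <;> linear_combination -h
    simp only [hX₃, hrow]
    rw [integral_sum_mul_sum_of_iIndepFun hL2 hindep hmean hvar, sum_product]
    simp only [hmatch, ← Nat.cast_sum, sum_card_filter_sub_eq_card_inter_image_add]
  have hle : ∀ k, #(Θ ∩ Θ.image ((k - i) + ·)) ≤ M := fun k => hΘ ▸ card_le_card inter_subset_left
  have hself : #(Θ ∩ Θ.image ((i - i) + ·)) = M := by simp [hΘ]
  refine ⟨hformula, ?_, ?_, fun hi => ?_⟩ <;> rw [hformula]
  · exact mul_nonneg (sq_nonneg σ) (sum_nonneg fun _ _ => Nat.cast_nonneg _)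
  · calc σ ^ 2 * ∑ k ∈ S, (#(Θ ∩ Θ.image ((k - i) + ·)) : ℝ) ≤ σ ^ 2 * ∑ k ∈ S, (M : ℝ) := by
          gcongr with k; exact_mod_cast hle k
      _ = s * M * σ ^ 2 := by rw [sum_const, hS, nsmul_eq_mul]; ring
  · calc (M : ℝ) * σ ^ 2 = σ ^ 2 * #(Θ ∩ Θ.image ((i - i) + ·)) := by rw [hself]; ring
      _ ≤ σ ^ 2 * ∑ k ∈ S, (#(Θ ∩ Θ.image ((k - i) + ·)) : ℝ) := by
          gcongr
          exact single_le_sum (f := fun k => (#(Θ ∩ Θ.image ((k - i) + ·)) : ℝ))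
            (fun _ _ => by positivity) hi

theorem expectation_X3 {N : ℕ} [NeZero N]
    {Ω : Type*} [MeasureSpace Ω] (μ : Measure Ω) [IsProbabilityMeasure μ]
    (b : ZMod N → Ω → ℝ) (σ : ℝ) (hσ : 0 < σ)
    (hmeas : ∀ i, Measurable (b i))
    (hL2 : ∀ i, MemLp (b i) 2 μ)
    (hindep : iIndepFun (m := fun _ => Real.measurableSpace) b μ)
    (hmean : ∀ i, ∫ ω, b i ω ∂μ = 0)
    (hvar : ∀ i, ∫ ω, (b i ω) ^ 2 ∂μ = σ ^ 2)
    (Θ S : Finset (ZMod N)) (M s : ℕ) (hΘ : Θ.card = M) (hS : S.card = s)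
    (i : ZMod N)
    (X₃ : ℝ)
    (hX₃ : X₃ = ∫ ω, ((∑ m ∈ Θ, ∑ k ∈ S, b (k - m) ω) * (∑ l ∈ Θ, b (i - l) ω)) ∂μ) :
    X₃ = σ ^ 2 * ∑ k ∈ S, ((Θ ∩ (Θ.image ((k - i) + ·))).card : ℝ) ∧
      0 ≤ X₃ ∧ X₃ ≤ (s : ℝ) * M * σ ^ 2 ∧ (i ∈ S → (M : ℝ) * σ ^ 2 ≤ X₃) :=
  expectation_X3_general μ b σ hL2 hindep hmean hvar Θ S M s hΘ hS i X₃ hX₃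
end

section
/- Let A ∈ ℝ^{M×N}, S ⊂ [N], and suppose ker(A) ∩ H_S^0 = {0}, where H_S^0 = {w ∈ ℝ^N : w_i ≤ 0 for i ∈ S, w_i ≥ 0 for i ∉ S}. Then both 1_S and 1 - 1_S = 1_{S^c} are the unique solutions of their respective box-constrained basis pursuit problems: 1_S uniquely minimizes ‖x‖₁ subject to Ax = A·1_S and x ∈ [0,1]^N, and 1_{S^c} uniquely minimizes ‖x‖₁ subject to Ax = A·1_{S^c} and x ∈ [0,1]^N. -/
/-!
Any `x ∈ [0,1]^N` satisfies `x - 1_S ∈ H_S^0` and `1_{S^c} - x ∈ H_S^0`. If moreover `x` has the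
same image under `A` as `1_S` (resp. `1_{S^c}`), that difference lies in `ker A ∩ H_S^0 = {0}`.
So each indicator is the only feasible point of its problem, and the strict inequality is vacuous.
-/

open Finset Matrix

theorem Matrix.eq_of_mulVec_eq_of_kernel_sign_condition {m n R : Type*} [Fintype n]
    [Ring R] [PartialOrder R] [IsOrderedAddMonoid R] (A : Matrix m n R) (S : Finset n)
    (hker : ∀ w : n → R, A *ᵥ w = 0 → (∀ i ∈ S, w i ≤ 0) → (∀ i ∉ S, 0 ≤ w i) → w = 0)
    {x y : n → R} (hA : A *ᵥ x = A *ᵥ y) (hS : ∀ i ∈ S, x i ≤ y i) (hSc : ∀ i ∉ S, y i ≤ x i) :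
    x = y :=
  sub_eq_zero.mp <| hker (x - y) (by rw [mulVec_sub, hA, sub_self])
    (fun i hi => sub_nonpos.mpr (hS i hi)) (fun i hi => sub_nonneg.mpr (hSc i hi))

theorem kernel_condition_implies_bp_unique {M N : ℕ} (A : Matrix (Fin M) (Fin N) ℝ)
    (S : Finset (Fin N))
    (hker : ∀ w : Fin N → ℝ, A.mulVec w = 0 →
      (∀ i ∈ S, w i ≤ 0) → (∀ i ∉ S, 0 ≤ w i) → w = 0) :
    (∀ x : Fin N → ℝ, (∀ i, x i ∈ Set.Icc (0:ℝ) 1) →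
        A.mulVec x = A.mulVec (fun i => if i ∈ S then (1:ℝ) else 0) →
        x ≠ (fun i => if i ∈ S then (1:ℝ) else 0) →
        ∑ i, |(fun i => if i ∈ S then (1:ℝ) else 0) i| < ∑ i, |x i|) ∧
      (∀ x : Fin N → ℝ, (∀ i, x i ∈ Set.Icc (0:ℝ) 1) →
        A.mulVec x = A.mulVec (fun i => if i ∈ S then (0:ℝ) else 1) →
        x ≠ (fun i => if i ∈ S then (0:ℝ) else 1) →
        ∑ i, |(fun i => if i ∈ S then (0:ℝ) else 1) i| < ∑ i, |x i|) := by
  refine ⟨fun x hx hA hne => absurd ?_ hne, fun x hx hA hne => absurd ?_ hne⟩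
  · exact A.eq_of_mulVec_eq_of_kernel_sign_condition S hker hA
      (fun i hi => by simpa [hi] using (hx i).2) (fun i hi => by simpa [hi] using (hx i).1)
  · exact (A.eq_of_mulVec_eq_of_kernel_sign_condition S hker hA.symm
      (fun i hi => by simpa [hi] using (hx i).1) (fun i hi => by simpa [hi] using (hx i).2)).symm
end
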